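/- arXiv:1406.0806 — 3 statements merged into one kernel-verified Lean document; each statement's English description precedes it below -/
import Mathlib

section
/- Let E be a real Banach space and G : E × E → ℝ a continuous bilinear form such that the induced map G : E → E* is a topological isomorphism. If V ⊆ E is a closed subspace such that the restriction of G to V × V also induces a topological isomorphism V → V*, then E decomposes as the direct sum E = V ⊕ V^⊥G, where V^⊥G = {e ∈ E : G(e, v) = 0 for all v ∈ V}. -/
/-- The `G`-orthogonal complement `V^⊥G = {e ∈ E : G(e,v) = 0 for all v ∈ V}` of a
subspace `V` with respect to a continuous bilinear form `G`. -/
def perpG {E : Type*} [NormedAddCommGroup E] [NormedSpace ℝ E]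
    (G : E →L[ℝ] E →L[ℝ] ℝ) (V : Submodule ℝ E) : Submodule ℝ E where
  carrier := {e : E | ∀ v ∈ V, G e v = 0}
  add_mem' := by
    intro a b ha hb v hv
    simp only [Set.mem_setOf_eq] at *
    simp [map_add, ha v hv, hb v hv]
  zero_mem' := by intro v hv; simp
  smul_mem' := by
    intro c a ha v hv
    simp only [Set.mem_setOf_eq] at *
    simp [map_smul, ha v hv]

/-! If `G` restricted to `V × V` induces a bijection `V → V*`, every `e : E` splits as
`e = v + (e - v)` with `v ∈ V` the unique vector such that `G v = G e` on `V`; then `e - v` is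
`G`-orthogonal to `V`, and injectivity on `V` makes the splitting unique. -/

section perpG

variable {E : Type*} [NormedAddCommGroup E] [NormedSpace ℝ E]
  (G : E →L[ℝ] E →L[ℝ] ℝ) (V : Submodule ℝ E)

theorem mem_perpG {e : E} : e ∈ perpG G V ↔ ∀ v ∈ V, G e v = 0 := Iff.rfl

theorem disjoint_perpG_of_injective
    (hGV : Function.Injective fun v : V => (G (v : E)).comp V.subtypeL) :
    Disjoint V (perpG G V) := by
  rw [Submodule.disjoint_def]
  intro x hxV hxP
  have hx_zero : (⟨x, hxV⟩ : V) = 0 := hGV <| by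
    ext w
    simpa using (mem_perpG G V).1 hxP w w.2
  exact congrArg Subtype.val hx_zero

theorem codisjoint_perpG_of_surjective
    (hGV : Function.Surjective fun v : V => (G (v : E)).comp V.subtypeL) :
    Codisjoint V (perpG G V) := by
  rw [codisjoint_iff, eq_top_iff]
  intro e _
  obtain ⟨v, hv⟩ := hGV ((G e).comp V.subtypeL)
  have hperp : e - v ∈ perpG G V := fun w hw => by
    have hvw := congrArg (fun f => f ⟨w, hw⟩) hv
    simp only [ContinuousLinearMap.comp_apply, Submodule.subtypeL_apply] at hvw
    simp [map_sub, hvw]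
  simpa using Submodule.add_mem_sup v.2 hperp

theorem isCompl_perpG_of_bijective
    (hGV : Function.Bijective fun v : V => (G (v : E)).comp V.subtypeL) :
    IsCompl V (perpG G V) :=
  ⟨disjoint_perpG_of_injective G V hGV.1, codisjoint_perpG_of_surjective G V hGV.2⟩

end perpG

theorem stmt0_general {E : Type*} [NormedAddCommGroup E] [NormedSpace ℝ E]
    (G : E →L[ℝ] E →L[ℝ] ℝ)
    (V : Submodule ℝ E)
    (hGV : Function.Bijective fun v : V => ((G (v : E)).comp V.subtypeL)) :
    IsCompl V (perpG G V) :=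
  isCompl_perpG_of_bijective G V hGV

/-- Let `E` be a real Banach space and `G` a continuous bilinear form on `E` such that the
induced map `E → E*` is a topological isomorphism (being a continuous linear bijection between
Banach spaces, by the open mapping theorem bijectivity suffices).  If `V ⊆ E` is a closed
subspace such that the restriction of `G` to `V × V` also induces a topological isomorphism
`V → V*`, then `E = V ⊕ V^⊥G`. -/
theorem stmt0 {E : Type*} [NormedAddCommGroup E] [NormedSpace ℝ E] [CompleteSpace E]
    (G : E →L[ℝ] E →L[ℝ] ℝ)
    (hG : Function.Bijective fun e : E => G e)
    (V : Submodule ℝ E) (hVclosed : IsClosed (V : Set E))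
    (hGV : Function.Bijective fun v : V => ((G (v : E)).comp V.subtypeL)) :
    IsCompl V (perpG G V) :=
  stmt0_general G V hGV
end

section
/- Let T : D ⊆ L²(X,ℂ) → L²(X,ℂ) be a closed densely defined operator, self-adjoint with respect to the L² inner product, such that T commutes with its conjugate operator T̄ (defined by T̄u := conj(T(conj u))). Then the kernel of the composition T T̄ intersected with the real-valued functions equals { Re u : u ∈ Ker T }. -/
/-!
Write `T̄ = c ∘ T ∘ c`; it is again symmetric and commutes with `T`. For commuting symmetric
`T`, `S`, the kernel of `T S` is `ker T + ker S`: split `w = b + a` with `b ∈ ker S` and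
`a ∈ (ker S)ᗮ`; both subspaces are `T`-invariant and `T w ∈ ker S`, so `T a ∈ ker S ∩ (ker S)ᗮ`
vanishes. If moreover `w = a + b` is real with `a ∈ ker T`, `b ∈ ker T̄`, then `u = a + c b` lies
in `ker T` and `(u + c u)/2 = (w + c w)/2 = w`.
-/

open LinearMap Submodule
open scoped InnerProductSpace

namespace LinearMap.IsSymmetric

variable {𝕜 E : Type*} [RCLike 𝕜] [NormedAddCommGroup E] [InnerProductSpace 𝕜 E]

theorem apply_mem_orthogonal {T : E →ₗ[𝕜] E} (hT : T.IsSymmetric) {K : Submodule 𝕜 E}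
    (hK : ∀ u ∈ K, T u ∈ K) {v : E} (hv : v ∈ Kᗮ) : T v ∈ Kᗮ := fun u hu =>
  hT u v ▸ hv (T u) (hK u hu)

theorem ker_comp_le_ker_sup_ker [CompleteSpace E] {T S : E →ₗ[𝕜] E} (hT : T.IsSymmetric)
    (hS : S.IsSymmetric) (hTS : T ∘ₗ S = S ∘ₗ T) : ker (T ∘ₗ S) ≤ ker T ⊔ ker S := by
  have hST : ∀ u, S (T u) = T (S u) := fun u => (LinearMap.congr_fun hTS u).symm
  have : CompleteSpace (ker S) :=
    (ContinuousLinearMap.isClosed_ker ⟨S, hS.continuous⟩).completeSpace_coe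
  have hT_ker : ∀ u ∈ ker S, T u ∈ ker S := fun u hu => by
    rw [mem_ker] at hu ⊢
    rw [hST, hu, map_zero]
  intro w hw
  obtain ⟨b, hb, a, ha, rfl⟩ := exists_add_mem_mem_orthogonal (K := ker S) w
  have hTa : T a ∈ ker S := by
    have hTw : T (b + a) ∈ ker S := by
      rw [mem_ker, hST]
      exact hw
    simpa using (ker S).sub_mem hTw (hT_ker b hb)
  have hTa_zero : T a = 0 :=
    disjoint_def.1 (ker S).orthogonal_disjoint _ hTa (hT.apply_mem_orthogonal hT_ker ha)
  exact add_comm a b ▸ add_mem_sup (mem_ker.2 hTa_zero) hb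

theorem conj_comp_comp_conj {T : E →ₗ[𝕜] E} (hT : T.IsSymmetric) (C : E →ₗ⋆[𝕜] E)
    (hC_invol : ∀ u, C (C u) = u) (hC_inner : ∀ u v, ⟪C u, C v⟫_𝕜 = starRingEnd 𝕜 ⟪u, v⟫_𝕜) :
    (C ∘ₛₗ T ∘ₛₗ C).IsSymmetric := fun x y => by
  have h := hC_inner x (C (T (C y)))
  rw [hC_invol] at h
  simp only [coe_comp, Function.comp_apply]
  rw [← hC_invol y, hC_inner, hC_invol, hT, h, RCLike.conj_conj]

end LinearMap.IsSymmetric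

/-- Let `T` be a densely defined self-adjoint operator on `L²(X,ℂ)` (here formalized on the
whole Hilbert space `H = L²(X,ℂ)`, equipped with the complex conjugation `c : u ↦ conj u`,
given abstractly as an antilinear involution compatible with the inner product) such that `T`
commutes with its conjugate operator `T̄ := c ∘ T ∘ c`.  Then
`Ker (T T̄) ∩ {real-valued functions} = { Re u : u ∈ Ker T }`,
where the real-valued elements are the fixed points of `c` and `Re u = (u + c u)/2`. -/
theorem stmt5 {H : Type*} [NormedAddCommGroup H] [InnerProductSpace ℂ H] [CompleteSpace H]
    (c : H → H)
    (hc_add : ∀ u v, c (u + v) = c u + c v)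
    (hc_smul : ∀ (a : ℂ) (u : H), c (a • u) = (starRingEnd ℂ a) • c u)
    (hc_invol : ∀ u, c (c u) = u)
    (hc_inner : ∀ u v, (inner ℂ (c u) (c v) : ℂ) = starRingEnd ℂ (inner ℂ u v : ℂ))
    (T : H →ₗ[ℂ] H)
    (hT_selfadj : ∀ u v, (inner ℂ (T u) v : ℂ) = (inner ℂ u (T v) : ℂ))
    (hT_comm : ∀ u, T (c (T (c u))) = c (T (c (T u)))) :
    {u : H | T (c (T (c u))) = 0 ∧ c u = u} =
      {w : H | ∃ u, T u = 0 ∧ w = ((2 : ℂ)⁻¹) • (u + c u)} := by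
  let C : H →ₗ⋆[ℂ] H := { toFun := c, map_add' := hc_add, map_smul' := hc_smul }
  have hT : T.IsSymmetric := hT_selfadj
  have hTS : T ∘ₗ (C ∘ₛₗ T ∘ₛₗ C) = (C ∘ₛₗ T ∘ₛₗ C) ∘ₗ T := LinearMap.ext hT_comm
  have hc_zero : c 0 = 0 := C.map_zero
  ext w
  constructor
  · rintro ⟨hw, hcw⟩
    obtain ⟨a, ha, b, hb, rfl⟩ := mem_sup.1 <|
      hT.ker_comp_le_ker_sup_ker (hT.conj_comp_comp_conj C hc_invol hc_inner) hTS hw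
    have hTcb : T (c b) = 0 := by
      rw [← hc_invol (T (c b))]
      exact (congrArg c hb).trans hc_zero
    refine ⟨a + c b, by rw [map_add, mem_ker.1 ha, hTcb, add_zero], ?_⟩
    have hsum : a + c b + c (a + c b) = a + b + c (a + b) := by
      rw [hc_add, hc_add, hc_invol]
      abel
    rw [hsum, hcw, ← two_smul ℂ, smul_smul, inv_mul_cancel₀ two_ne_zero, one_smul]
  · rintro ⟨u, hu, rfl⟩
    have hreal : c ((2 : ℂ)⁻¹ • (u + c u)) = (2 : ℂ)⁻¹ • (u + c u) := by
      rw [hc_smul, hc_add, hc_invol, map_inv₀, Complex.conj_ofNat, add_comm]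
    refine ⟨?_, hreal⟩
    rw [hreal, map_smul, map_add, hu, zero_add, hc_smul, map_smul, hT_comm, hu, hc_zero, map_zero,
      hc_zero, smul_zero]
end

section
/- Let (X,J,g) be a Kähler manifold and let A be a smooth J-anti-linear endomorphism of T_X (i.e. AJ = -JA with values in T_{X,J}). Then the curvature action vanishes on the antisymmetric part: if A is also g-antisymmetric (A = -Aᵀ over g), then R_g ∗ A = 0, where (R_g∗A)ξ := ∑_k R_g(ξ,e_k) A e_k over a g-orthonormal frame. -/
/-!
Expanding `A e_k` in the frame and using the skew-symmetry of `A`, the first Bianchi identity turns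
`2 ∑_k R(ξ, e_k) A e_k` into `-∑_k R(e_k, A e_k) ξ`. By pair symmetry its inner product with `w` is
`-tr (A ∘ R(ξ, w))`, and this trace vanishes because `A ∘ R(ξ, w)` anticommutes with `J`.
-/

open scoped RealInnerProductSpace

namespace LinearMap

theorem trace_eq_zero_of_anticomm {R M : Type*} [CommRing R] [IsAddTorsionFree R]
    [AddCommGroup M] [Module R M] {J C : M →ₗ[R] M} (hJ : ∀ x, J (J x) = -x)
    (hC : ∀ x, C (J x) = -J (C x)) : trace R M C = 0 := by
  have hJJ : J * J = -1 := LinearMap.ext hJ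
  have hconj : J * (C * J) = C := LinearMap.ext fun x => by simp [hC, hJ]
  refine self_eq_neg.mp ?_
  calc trace R M C = trace R M (C * J * J) := by rw [← trace_mul_comm, hconj]
    _ = -trace R M C := by rw [mul_assoc, hJJ, mul_neg_one, map_neg]

end LinearMap

section

variable {V W ι : Type*} [NormedAddCommGroup V] [InnerProductSpace ℝ V] [Fintype ι]
  [AddCommGroup W] [Module ℝ W]

theorem OrthonormalBasis.sum_apply_apply_eq_neg_of_skew (b : OrthonormalBasis ι ℝ V)
    (B : V →ₗ[ℝ] V →ₗ[ℝ] W) {A : V →ₗ[ℝ] V} (hA : ∀ x y, ⟪A x, y⟫ = -⟪x, A y⟫) :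
    ∑ k, B (b k) (A (b k)) = -∑ k, B (A (b k)) (b k) := by
  calc ∑ k, B (b k) (A (b k)) = ∑ k, ∑ l, ⟪b l, A (b k)⟫ • B (b k) (b l) := by
        refine Finset.sum_congr rfl fun k _ => ?_
        conv_lhs => rw [← b.sum_repr' (A (b k))]
        simp only [map_sum, map_smul]
    _ = ∑ l, ∑ k, -(⟪b k, A (b l)⟫ • B (b k) (b l)) := by
        rw [Finset.sum_comm]
        refine Finset.sum_congr rfl fun l _ => Finset.sum_congr rfl fun k _ => ?_
        rw [real_inner_comm, hA, real_inner_comm, neg_smul]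
    _ = -∑ l, B (A (b l)) (b l) := by
        simp_rw [Finset.sum_neg_distrib]
        refine congrArg Neg.neg (Finset.sum_congr rfl fun l _ => ?_)
        conv_rhs => rw [← b.sum_repr' (A (b l))]
        simp only [map_sum, map_smul, LinearMap.sum_apply, LinearMap.smul_apply]

variable (R : V →ₗ[ℝ] V →ₗ[ℝ] V →ₗ[ℝ] V)

theorem two_smul_sum_apply_skew_eq_of_bianchi (hR1 : ∀ x y z, R x y z = -R y x z)
    (hBianchi : ∀ x y z, R x y z + R y z x + R z x y = 0) (b : OrthonormalBasis ι ℝ V)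
    {A : V →ₗ[ℝ] V} (hA : ∀ x y, ⟪A x, y⟫ = -⟪x, A y⟫) (ξ : V) :
    (2 : ℝ) • ∑ k, R ξ (b k) (A (b k)) = -∑ k, R (b k) (A (b k)) ξ := by
  have hcycle : ∀ x y, R ξ x y + -R ξ y x = -R x y ξ := fun x y => by
    rw [eq_neg_iff_add_eq_zero, ← hBianchi x y ξ, hR1 y ξ x]
    abel
  calc (2 : ℝ) • ∑ k, R ξ (b k) (A (b k))
      = ∑ k, R ξ (b k) (A (b k)) + -∑ k, R ξ (A (b k)) (b k) := by
        rw [two_smul]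
        nth_rw 2 [b.sum_apply_apply_eq_neg_of_skew (R ξ) hA]
    _ = -∑ k, R (b k) (A (b k)) ξ := by
        simp only [← Finset.sum_neg_distrib, ← Finset.sum_add_distrib, hcycle]

theorem inner_sum_apply_skew_eq_neg_trace
    (hRpair : ∀ x y z w, ⟪R x y z, w⟫ = ⟪R z w x, y⟫) (b : OrthonormalBasis ι ℝ V)
    {A : V →ₗ[ℝ] V} (hA : ∀ x y, ⟪A x, y⟫ = -⟪x, A y⟫) (ξ w : V) :
    ⟪∑ k, R (b k) (A (b k)) ξ, w⟫ = -LinearMap.trace ℝ V (A ∘ₗ R ξ w) := by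
  rw [LinearMap.trace_eq_sum_inner _ b, sum_inner, ← Finset.sum_neg_distrib]
  refine Finset.sum_congr rfl fun k _ => ?_
  rw [hRpair, LinearMap.comp_apply, real_inner_comm, hA]

end

theorem stmt14_general {V : Type*} [NormedAddCommGroup V] [InnerProductSpace ℝ V]
    {ι : Type*} [Fintype ι] (b : OrthonormalBasis ι ℝ V)
    (J : V →ₗ[ℝ] V) (hJ2 : ∀ x, J (J x) = -x)
    (R : V →ₗ[ℝ] V →ₗ[ℝ] V →ₗ[ℝ] V)
    (hR1 : ∀ x y z, R x y z = -R y x z)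
    (hRpair : ∀ x y z w, ⟪R x y z, w⟫ = ⟪R z w x, y⟫)
    (hBianchi : ∀ x y z, R x y z + R y z x + R z x y = 0)
    (hRJ : ∀ x y z, R x y (J z) = J (R x y z))
    (A : V →ₗ[ℝ] V) (hAJ : ∀ x, A (J x) = -J (A x))
    (hAanti : ∀ x y, ⟪A x, y⟫ = -⟪x, A y⟫) :
    ∀ ξ, ∑ k, R ξ (b k) (A (b k)) = 0 := by
  intro ξ
  have htrace : ∀ w, LinearMap.trace ℝ V (A ∘ₗ R ξ w) = 0 := fun w =>
    LinearMap.trace_eq_zero_of_anticomm hJ2 fun x => by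
      rw [LinearMap.comp_apply, LinearMap.comp_apply, hRJ, hAJ]
  have hcontr : ∑ k, R (b k) (A (b k)) ξ = 0 := ext_inner_right ℝ fun w => by
    rw [inner_sum_apply_skew_eq_neg_trace R hRpair b hAanti, htrace, neg_zero, inner_zero_left]
  have h := two_smul_sum_apply_skew_eq_of_bianchi R hR1 hBianchi b hAanti ξ
  rw [hcontr, neg_zero, smul_eq_zero] at h
  exact h.resolve_left two_ne_zero

/-- Let `(X,J,g)` be a Kähler manifold and `A` a smooth `J`-anti-linear endomorphism field of
`T_X` which is moreover `g`-antisymmetric.  Then the curvature action vanishes: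
`R_g ∗ A = 0`, where `(R_g∗A)ξ := ∑_k R_g(ξ,e_k) A e_k` over a `g`-orthonormal frame.
Pointwise model: `V` is the tangent space with inner product `g`, orthonormal basis `b`,
`J` the complex structure (orthogonal, `J² = -1`), `R` the curvature tensor with its standard
symmetries (antisymmetries, pair symmetry, first Bianchi identity) and `J`-invariance
`R(x,y)J = JR(x,y)`, and `A` satisfies `AJ = -JA`, `A = -Aᵀ`. -/
theorem stmt14 {V : Type*} [NormedAddCommGroup V] [InnerProductSpace ℝ V]
    [FiniteDimensional ℝ V] {ι : Type*} [Fintype ι] (b : OrthonormalBasis ι ℝ V)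
    (J : V →ₗ[ℝ] V) (hJ2 : ∀ x, J (J x) = -x)
    (hJiso : ∀ x y, ⟪J x, J y⟫ = ⟪x, y⟫)
    (R : V →ₗ[ℝ] V →ₗ[ℝ] V →ₗ[ℝ] V)
    (hR1 : ∀ x y z, R x y z = -R y x z)
    (hR2 : ∀ x y z w, ⟪R x y z, w⟫ = -⟪R x y w, z⟫)
    (hRpair : ∀ x y z w, ⟪R x y z, w⟫ = ⟪R z w x, y⟫)
    (hBianchi : ∀ x y z, R x y z + R y z x + R z x y = 0)
    (hRJ : ∀ x y z, R x y (J z) = J (R x y z))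
    (A : V →ₗ[ℝ] V) (hAJ : ∀ x, A (J x) = -J (A x))
    (hAanti : ∀ x y, ⟪A x, y⟫ = -⟪x, A y⟫) :
    ∀ ξ, ∑ k, R ξ (b k) (A (b k)) = 0 :=
  stmt14_general b J hJ2 R hR1 hRpair hBianchi hRJ A hAJ hAanti
end
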